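/- Let m ≥ 3 and n ≥ 6. If n ≡ 4 (mod 6), then γ_{r2}(C_m □ C_n) ≤ ⌈m/3⌉·(n+2); otherwise (for all other residues of n modulo 6 with n not ≡ 0 (mod 6)), γ_{r2}(C_m □ C_n) ≤ ⌈m/3⌉·(n+1). -/

import Mathlib

open SimpleGraph Finset

/-- `f` is a `k`-rainbow dominating function of `G`: every vertex with empty label
sees all `k` colors in its open neighborhood. -/
def IsRainbowDominating {V : Type*} (G : SimpleGraph V) (k : ℕ)
    (f : V → Finset (Fin k)) : Prop :=
  ∀ v, f v = ∅ → ∀ c : Fin k, ∃ u, G.Adj v u ∧ c ∈ f u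

/-- The `k`-rainbow domination number: the minimum weight of a `k`-rainbow
dominating function. -/
noncomputable def rainbowDomNum {V : Type*} [Fintype V] (G : SimpleGraph V) (k : ℕ) : ℕ :=
  sInf {w | ∃ f : V → Finset (Fin k), IsRainbowDominating G k f ∧ w = ∑ v, (f v).card}

/-!
On `C₃ □ Cₙ`, labelling the cells of the diagonal `ρ + j ≡ 2 (mod 3)` alternately with the
colours `0` and `1` rainbow-dominates every vertex when `6 ∣ n`. For `6 ∤ n` the seam is repaired by
replacing the last column with a small patch of weight `2` (of weight `3` when `n ≡ 4 (mod 6)`),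
which gives weight `n + 1` (resp. `n + 2`).

A rainbow dominating function of `C_p □ H` transfers to `C_m □ H` at `⌈m/p⌉` times its weight:
stack `⌈m/p⌉` copies of the `p` rows, push the rows that overflow onto the last row `m - 1`, and
label each row of `C_m` by the union of the labels of the rows placed on it. An empty vertex only
carries empty copies, and the rows that dominate such a copy land on the same row of `C_m` or on
a neighbouring one.
-/

theorem IsRainbowDominating.rainbowDomNum_le {V : Type*} [Fintype V] {G : SimpleGraph V} {k : ℕ}
    {f : V → Finset (Fin k)} (hf : IsRainbowDominating G k f) :
    rainbowDomNum G k ≤ ∑ v, (f v).card :=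
  Nat.sInf_le ⟨f, hf, rfl⟩

theorem exists_isRainbowDominating_sum_card_eq {V : Type*} [Fintype V] (G : SimpleGraph V) (k : ℕ) :
    ∃ f, IsRainbowDominating G k f ∧ ∑ v, (f v).card = rainbowDomNum G k := by
  obtain ⟨f, hf, hw⟩ := Nat.sInf_mem (s := {w | ∃ f : V → Finset (Fin k),
      IsRainbowDominating G k f ∧ w = ∑ v, (f v).card})
    ⟨_, fun _ => univ, fun _ hv c => absurd hv (ne_empty_of_mem (mem_univ c)), rfl⟩
  exact ⟨f, hf, hw.symm⟩

section Folding

variable {V W ι : Type*} {k : ℕ} {G : SimpleGraph V} {G' : SimpleGraph W} {σ : ι → V}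
  {τ : ι → W}

/-- Copy `x` of the vertex `σ x` of `G` is placed on the vertex `τ x` of `G'`. -/
def IsFolding (G : SimpleGraph V) (G' : SimpleGraph W) (σ : ι → V) (τ : ι → W) : Prop :=
  ∀ w, ∃ x, τ x = w ∧ ∀ u, G.Adj (σ x) u → ∃ y, σ y = u ∧ (τ y = w ∨ G'.Adj w (τ y))

theorem IsFolding.boxProd {β : Type*} (hfold : IsFolding G G' σ τ) (H : SimpleGraph β) :
    IsFolding (G □ H) (G' □ H) (Prod.map σ id) (Prod.map τ id) := by
  rintro ⟨w, b⟩
  obtain ⟨x, rfl, hx⟩ := hfold w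
  refine ⟨(x, b), rfl, ?_⟩
  rintro ⟨u, b'⟩ (⟨hu, rfl⟩ | ⟨hb, hu⟩)
  · obtain ⟨y, rfl, hy⟩ := hx u hu
    refine ⟨(y, b), rfl, ?_⟩
    rcases hy with hy | hy
    · exact Or.inl (by simp [hy])
    · exact Or.inr (boxProd_adj_left.mpr hy)
  · exact ⟨(x, b'), Prod.ext hu rfl, Or.inr (boxProd_adj_right.mpr hb)⟩

def foldLabels [Fintype ι] [DecidableEq W] (σ : ι → V) (τ : ι → W) (f : V → Finset (Fin k))
    (w : W) : Finset (Fin k) :=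
  (univ.filter fun x => τ x = w).biUnion fun x => f (σ x)

variable [Fintype ι] [DecidableEq W]

theorem subset_foldLabels (f : V → Finset (Fin k)) (x : ι) : f (σ x) ⊆ foldLabels σ τ f (τ x) :=
  subset_biUnion_of_mem (fun y => f (σ y)) (by simp)

theorem IsFolding.isRainbowDominating_foldLabels (hfold : IsFolding G G' σ τ)
    {f : V → Finset (Fin k)} (hf : IsRainbowDominating G k f) :
    IsRainbowDominating G' k (foldLabels σ τ f) := by
  intro w hw c
  obtain ⟨x, rfl, hx⟩ := hfold w
  have hfx : f (σ x) = ∅ := subset_empty.mp (hw ▸ subset_foldLabels f x)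
  obtain ⟨u, hu, hcu⟩ := hf _ hfx c
  obtain ⟨y, rfl, hy | hy⟩ := hx u hu
  · rw [← hy] at hw
    exact absurd (subset_foldLabels (τ := τ) f y hcu) (by simp [hw])
  · exact ⟨τ y, hy, subset_foldLabels f y hcu⟩

theorem sum_card_foldLabels_le [Fintype W] (f : V → Finset (Fin k)) :
    ∑ w, (foldLabels σ τ f w).card ≤ ∑ x, (f (σ x)).card :=
  calc ∑ w, (foldLabels σ τ f w).card
      ≤ ∑ w, ∑ x ∈ univ.filter (fun x => τ x = w), (f (σ x)).card :=
        sum_le_sum fun _ _ => card_biUnion_le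
    _ = ∑ x, (f (σ x)).card := sum_fiberwise univ τ _

end Folding

theorem cycleGraph_adj_iff_val {n : ℕ} {a b : Fin n} :
    (cycleGraph n).Adj a b ↔ a ≠ b ∧ (a.val + 1 = b.val ∨ b.val + 1 = a.val ∨
      a.val + 1 = n ∧ b.val = 0 ∨ b.val + 1 = n ∧ a.val = 0) := by
  have hsub (x y : Fin n) : ((x - y : Fin n) : ℕ) = if y.val ≤ x.val then x.val - y.val
      else n + x.val - y.val := by
    split_ifs with hxy
    exacts [Fin.coe_sub_iff_le.2 hxy, Fin.coe_sub_iff_lt.2 (not_le.1 hxy)]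
  have := a.isLt
  have := b.isLt
  rw [cycleGraph_adj', hsub, hsub, Ne, Fin.ext_iff]
  split_ifs <;> omega

theorem isFolding_cycleGraph {p q m : ℕ} (h : m + 1 ≤ p * q) :
    IsFolding (cycleGraph p) (cycleGraph (m + 1)) (Prod.snd : Fin q × Fin p → Fin p)
      (fun x => Fin.clamp (x.2 + p * x.1) m) := by
  rintro ⟨i, hi⟩
  have hp : 0 < p := Nat.pos_of_ne_zero (by rintro rfl; simp at h)
  have hdiv := Nat.div_add_mod i p
  have hmod := Nat.mod_lt i hp
  have hd : i / p < q := Nat.div_lt_of_lt_mul (by omega)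
  refine ⟨(⟨i / p, hd⟩, ⟨i % p, hmod⟩), Fin.ext (by simp; omega), fun u hu => ?_⟩
  have near (a : Fin q) (ha : let t := min (u.val + p * a) m
      t ≠ i → i + 1 = t ∨ t + 1 = i ∨ i = m ∧ t = 0 ∨ t = m ∧ i = 0) :
      ∃ y : Fin q × Fin p, y.2 = u ∧ (Fin.clamp (y.2 + p * y.1) m = ⟨i, hi⟩ ∨
        (cycleGraph (m + 1)).Adj ⟨i, hi⟩ (Fin.clamp (y.2 + p * y.1) m)) := by
    refine ⟨(a, u), rfl, ?_⟩
    by_cases heq : Fin.clamp (u + p * a) m = ⟨i, hi⟩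
    · exact Or.inl heq
    · refine Or.inr (cycleGraph_adj_iff_val.2 ⟨Ne.symm heq, ?_⟩)
      have := ha (fun h' => heq (Fin.ext (by simpa using h')))
      simp only [Fin.coe_clamp]
      omega
  -- `u` is the row `i ± 1 (mod p)`: its copy sits in block `d = i / p`, in the next or the
  -- previous block, or, past either end, in block `0` or in the last block (clamped onto row `m`).
  have hu' := (cycleGraph_adj_iff_val.1 hu).2
  have hu_lt := u.isLt
  simp only at hu'
  clear hu
  generalize i / p = d at hdiv hd ⊢
  rcases hu' with hu' | hu' | ⟨hr, hu'⟩ | ⟨hu', hr⟩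
  · exact near ⟨d, hd⟩ (by simp only; omega)
  · exact near ⟨d, hd⟩ (by simp only; omega)
  · by_cases hq : d + 1 < q
    · exact near ⟨d + 1, hq⟩ (by simp only [Nat.mul_succ]; omega)
    · have : p * q = p * d + p := by rw [← Nat.mul_succ]; congr; omega
      exact near ⟨0, Nat.zero_lt_of_lt hd⟩ (by simp only [mul_zero]; omega)
  · by_cases hd0 : d = 0
    · have : p * (q - 1) + p = p * q := by rw [← Nat.mul_succ]; congr; omega
      rw [hd0, mul_zero] at hdiv
      exact near ⟨q - 1, by omega⟩ (by simp only; omega)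
    · have : p * (d - 1) + p = p * d := by rw [← Nat.mul_succ]; congr; omega
      exact near ⟨d - 1, by omega⟩ (by simp only; omega)

theorem rainbowDomNum_cycleGraph_boxProd_le {β : Type*} [Fintype β] (H : SimpleGraph β) (k : ℕ)
    {p q m : ℕ} (h : m + 1 ≤ p * q) :
    rainbowDomNum (cycleGraph (m + 1) □ H) k ≤ q * rainbowDomNum (cycleGraph p □ H) k := by
  classical
  obtain ⟨f, hf, hw⟩ := exists_isRainbowDominating_sum_card_eq (cycleGraph p □ H) k
  have hfold := (isFolding_cycleGraph h).boxProd H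
  calc rainbowDomNum (cycleGraph (m + 1) □ H) k
      ≤ ∑ v, (foldLabels _ _ f v).card := (hfold.isRainbowDominating_foldLabels hf).rainbowDomNum_le
    _ ≤ ∑ x : (Fin q × Fin p) × β, (f (x.1.2, x.2)).card := sum_card_foldLabels_le f
    _ = q * rainbowDomNum (cycleGraph p □ H) k := by
      simp [← hw, Fintype.sum_prod_type, Finset.mul_sum]

section ColumnDominates

variable {V : Type*} {k : ℕ}

def ColumnDominates (G : SimpleGraph V) (L M R : V → Finset (Fin k)) : Prop :=
  ∀ v, M v = ∅ → ∀ c, (∃ u, G.Adj v u ∧ c ∈ M u) ∨ c ∈ L v ∨ c ∈ R v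

instance [Fintype V] (G : SimpleGraph V) [DecidableRel G.Adj] (L M R : V → Finset (Fin k)) :
    Decidable (ColumnDominates G L M R) := by
  unfold ColumnDominates; infer_instance

theorem isRainbowDominating_boxProd_cycleGraph {G : SimpleGraph V} {n : ℕ}
    (col : ℕ → V → Finset (Fin k))
    (h : ∀ j < n, ColumnDominates G (col (if j = 0 then n - 1 else j - 1)) (col j)
      (col (if j + 1 = n then 0 else j + 1))) :
    IsRainbowDominating (G □ cycleGraph n) k (fun v => col v.2 v.1) := by
  rintro ⟨v, j⟩ hv c
  dsimp only at hv
  have hj := j.isLt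
  have along (j' : ℕ) (hj' : j' < n) (hc : c ∈ col j' v) (hjj' : j.val + 1 = j' ∨ j' + 1 = j ∨
      j.val + 1 = n ∧ j' = 0 ∨ j' + 1 = n ∧ j.val = 0) :
      ∃ u, (G □ cycleGraph n).Adj (v, j) u ∧ c ∈ col u.2 u.1 :=
    ⟨(v, ⟨j', hj'⟩), boxProd_adj_right.2 (cycleGraph_adj_iff_val.2
      ⟨fun hjj => by
        rw [← show j.val = j' from congrArg Fin.val hjj, hv] at hc
        exact notMem_empty c hc, hjj'⟩), hc⟩
  rcases h j hj v hv c with ⟨u, hu, hc⟩ | hc | hc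
  · exact ⟨(u, j), boxProd_adj_left.2 hu, hc⟩
  · exact along _ (by split_ifs <;> omega) hc (by split_ifs <;> omega)
  · exact along _ (by split_ifs <;> omega) hc (by split_ifs <;> omega)

end ColumnDominates

def diagonalColumn (j : ℕ) (ρ : Fin 3) : Finset (Fin 2) :=
  if (ρ.val + j) % 3 = 2 then {⟨j % 2, Nat.mod_lt _ two_pos⟩} else ∅

def patchColumn : Fin 6 → Fin 3 → Finset (Fin 2) :=
  ![![∅, ∅, ∅], ![{1}, ∅, {0}], ![{1}, {1}, ∅], ![{0, 1}, ∅, ∅], ![{1}, ∅, {0, 1}],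
    ![{1}, {0}, ∅]]

def bandColumn (n j : ℕ) : Fin 3 → Finset (Fin 2) :=
  if j + 1 = n then patchColumn (Fin.ofNat 6 n) else diagonalColumn j

theorem bandColumn_of_add_one_eq {n j : ℕ} (h : j + 1 = n) :
    bandColumn n j = patchColumn (Fin.ofNat 6 n) :=
  if_pos h

theorem bandColumn_of_add_one_ne {n j : ℕ} (h : j + 1 ≠ n) :
    bandColumn n j = diagonalColumn j :=
  if_neg h

theorem diagonalColumn_congr {a b : ℕ} (h : a % 6 = b % 6) :
    diagonalColumn a = diagonalColumn b := by
  funext ρ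
  simp only [diagonalColumn, show a % 2 = b % 2 by omega,
    show (ρ.val + a) % 3 = (ρ.val + b) % 3 by omega]

theorem columnDominates_diagonalColumn (j : ℕ) :
    ColumnDominates (cycleGraph 3) (diagonalColumn (j + 5)) (diagonalColumn j)
      (diagonalColumn (j + 1)) := by
  have key : ∀ r : Fin 6, ColumnDominates (cycleGraph 3) (diagonalColumn (r + 5))
      (diagonalColumn r) (diagonalColumn (r + 1)) := by
    decide
  have := key ⟨j % 6, Nat.mod_lt _ (by norm_num)⟩
  simp only at this
  rwa [diagonalColumn_congr (a := j % 6 + 5) (b := j + 5) (by omega),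
    diagonalColumn_congr (a := j % 6) (b := j) (by omega),
    diagonalColumn_congr (a := j % 6 + 1) (b := j + 1) (by omega)] at this

theorem columnDominates_patchColumn (r : Fin 6) (hr : r ≠ 0) :
    ColumnDominates (cycleGraph 3) (patchColumn r) (diagonalColumn 0) (diagonalColumn 1) ∧
    ColumnDominates (cycleGraph 3) (diagonalColumn (r + 3)) (diagonalColumn (r + 4))
      (patchColumn r) ∧
    ColumnDominates (cycleGraph 3) (diagonalColumn (r + 4)) (patchColumn r)
      (diagonalColumn 0) := by
  revert r
  decide

theorem isRainbowDominating_bandColumn {n : ℕ} (hn : 3 ≤ n) (h6 : n % 6 ≠ 0) :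
    IsRainbowDominating (cycleGraph 3 □ cycleGraph n) 2 (fun v => bandColumn n v.2 v.1) := by
  obtain ⟨hfirst, hpen, hlast⟩ :=
    columnDominates_patchColumn (Fin.ofNat 6 n) (by simpa [Fin.ext_iff])
  rw [Fin.val_ofNat] at hpen hlast
  refine isRainbowDominating_boxProd_cycleGraph _ fun j hj => ?_
  rcases (show j = 0 ∨ j + 1 = n ∨ j + 2 = n ∨ 0 < j ∧ j + 2 < n by omega)
    with rfl | hj1 | hj2 | ⟨hj0, hj2⟩
  · rwa [if_pos rfl, if_neg (by omega), bandColumn_of_add_one_eq (j := n - 1) (by omega),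
      bandColumn_of_add_one_ne (j := 0) (by omega),
      bandColumn_of_add_one_ne (j := 0 + 1) (by omega)]
  · rwa [if_neg (by omega), if_pos hj1, bandColumn_of_add_one_eq hj1,
      bandColumn_of_add_one_ne (j := j - 1) (by omega),
      bandColumn_of_add_one_ne (j := 0) (by omega),
      diagonalColumn_congr (a := j - 1) (b := n % 6 + 4) (by omega)]
  · rwa [if_neg (by omega), if_neg (by omega), bandColumn_of_add_one_eq (j := j + 1) (by omega),
      bandColumn_of_add_one_ne (j := j - 1) (by omega),
      bandColumn_of_add_one_ne (j := j) (by omega),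
      diagonalColumn_congr (a := j - 1) (b := n % 6 + 3) (by omega),
      diagonalColumn_congr (a := j) (b := n % 6 + 4) (by omega)]
  · rw [if_neg (by omega), if_neg (by omega), bandColumn_of_add_one_ne (j := j - 1) (by omega),
      bandColumn_of_add_one_ne (j := j) (by omega),
      bandColumn_of_add_one_ne (j := j + 1) (by omega),
      diagonalColumn_congr (a := j - 1) (b := j + 5) (by omega)]
    exact columnDominates_diagonalColumn j

theorem sum_card_diagonalColumn (j : ℕ) : ∑ ρ, (diagonalColumn j ρ).card = 1 := by
  have key : ∀ r : Fin 6, ∑ ρ, (diagonalColumn r ρ).card = 1 := by decide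
  rw [diagonalColumn_congr (b := j % 6) (by omega)]
  exact key ⟨j % 6, Nat.mod_lt _ (by norm_num)⟩

theorem sum_card_patchColumn (r : Fin 6) (hr : r ≠ 0) :
    ∑ ρ, (patchColumn r ρ).card = if r.val = 4 then 3 else 2 := by
  revert r
  decide

theorem sum_card_bandColumn {n : ℕ} (h6 : n % 6 ≠ 0) :
    ∑ v : Fin 3 × Fin n, (bandColumn n v.2 v.1).card = n + if n % 6 = 4 then 2 else 1 := by
  obtain ⟨n, rfl⟩ : ∃ n', n = n' + 1 := ⟨n - 1, by omega⟩
  rw [Fintype.sum_prod_type_right, Fin.sum_univ_castSucc]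
  simp only [Fin.val_castSucc, Fin.val_last,
    bandColumn_of_add_one_ne (Nat.ne_of_lt (Nat.succ_lt_succ (Fin.isLt _))),
    bandColumn_of_add_one_eq rfl, sum_card_diagonalColumn, sum_const, card_univ,
    Fintype.card_fin, smul_eq_mul, mul_one]
  rw [sum_card_patchColumn _ (by simpa [Fin.ext_iff]), Fin.val_ofNat]
  split_ifs <;> omega

theorem rainbowDomNum_cycleGraph_three_boxProd_le {n : ℕ} (hn : 3 ≤ n) (h6 : n % 6 ≠ 0) :
    rainbowDomNum (cycleGraph 3 □ cycleGraph n) 2 ≤ n + if n % 6 = 4 then 2 else 1 :=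
  (isRainbowDominating_bandColumn hn h6).rainbowDomNum_le.trans_eq (sum_card_bandColumn h6)

theorem two_rainbow_dom_cycles_upper_general (m n : ℕ) (hm : 3 ≤ m) (hn : 6 ≤ n) :
    (n % 6 = 4 →
      (rainbowDomNum (cycleGraph m □ cycleGraph n) 2 : ℤ) ≤ ⌈(m : ℚ) / 3⌉ * (n + 2)) ∧
    (n % 6 ≠ 4 → n % 6 ≠ 0 →
      (rainbowDomNum (cycleGraph m □ cycleGraph n) 2 : ℤ) ≤ ⌈(m : ℚ) / 3⌉ * (n + 1)) := by
  obtain ⟨m, rfl⟩ : ∃ m', m = m' + 1 := ⟨m - 1, by omega⟩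
  have hceil : ⌈((m + 1 : ℕ) : ℚ) / 3⌉ = ((m + 3) / 3 : ℕ) := by
    have h := Rat.ceil_natCast_div_natCast (m + 1) 3
    push_cast at h ⊢
    omega
  have key (h6 : n % 6 ≠ 0) : rainbowDomNum (cycleGraph (m + 1) □ cycleGraph n) 2 ≤
      (m + 3) / 3 * (n + if n % 6 = 4 then 2 else 1) :=
    (rainbowDomNum_cycleGraph_boxProd_le (cycleGraph n) 2 (p := 3) (by omega)).trans
      (Nat.mul_le_mul_left _ (rainbowDomNum_cycleGraph_three_boxProd_le (by omega) h6))
  rw [hceil]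
  constructor
  · intro h4
    have := key (by omega)
    rw [if_pos h4] at this
    exact_mod_cast this
  · intro h4 h0
    have := key h0
    rw [if_neg h4] at this
    exact_mod_cast this
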